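/- arXiv:2207.00450 — 3 statements merged into one kernel-verified Lean document; each statement's English description precedes it below -/
import Mathlib

section
/- Let G = (V,E) be an undirected graph, D ⊆ E, and call a cycle a D-cycle if it contains exactly one edge of D. Then the family of D-cycles is uncrossable: given D-cycles C₁, C₂ and a path P₂ in C₂ sharing only its endpoints with C₁, one can choose a path P₁ in C₁ between these endpoints so that P₁ + P₂ contains exactly one edge of D (hence is a D-cycle) and (C₁ − P₁) + (C₂ − P₂) contains a D-cycle. -/
open Finset

variable {V : Type*} [DecidableEq V]

/-- The edge set of a (simple) cycle in `G`. -/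
def IsCycleEdges (G : SimpleGraph V) (s : Finset (Sym2 V)) : Prop :=
  ∃ (u : V) (c : G.Walk u u), c.IsCycle ∧ c.edges.toFinset = s

/-- The edge set of a (simple) path from `v` to `w` in `G`. -/
def IsPathEdges (G : SimpleGraph V) (v w : V) (s : Finset (Sym2 V)) : Prop :=
  ∃ p : G.Walk v w, p.IsPath ∧ p.edges.toFinset = s

/-- The set of vertices covered by an edge set. -/
def edgeVerts (s : Finset (Sym2 V)) : Set V := {x | ∃ e ∈ s, x ∈ e}

/-- A family of cycles (given by their edge sets) is uncrossable:
for `C₁, C₂` in the family and a `v`-`w`-path `P₂` contained in `C₂` sharing only its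
endpoints `v, w` with `C₁`, there is a `v`-`w`-path `P₁` contained in `C₁` such that
`P₁ + P₂` belongs to the family and `(C₁ - P₁) + (C₂ - P₂)` contains a member of the family. -/
def Uncrossable (G : SimpleGraph V) (𝒞 : Set (Finset (Sym2 V))) : Prop :=
  ∀ C₁ ∈ 𝒞, ∀ C₂ ∈ 𝒞, ∀ v w : V, v ≠ w → ∀ P₂ : Finset (Sym2 V),
    IsPathEdges G v w P₂ → P₂ ⊆ C₂ →
    edgeVerts P₂ ∩ edgeVerts C₁ ⊆ {v, w} →
    v ∈ edgeVerts C₁ → w ∈ edgeVerts C₁ →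
    ∃ P₁ : Finset (Sym2 V), IsPathEdges G v w P₁ ∧ P₁ ⊆ C₁ ∧
      (P₁ ∪ P₂) ∈ 𝒞 ∧ ∃ C ∈ 𝒞, C ⊆ (C₁ \ P₁) ∪ (C₂ \ P₂)

/-!
Split `C₁` at `v` and `w` into two `v`-`w`-paths and let `P₁` be the one whose number of
`D`-edges complements that of `P₂`, so that the cycle `P₁ ∪ P₂` has exactly one `D`-edge.
The other half `Q₁` of `C₁` and `C₂ \ P₂` are both odd exactly at `v` and `w`, and between them
they carry exactly one `D`-edge `d`; hence their symmetric difference is an even edge set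
containing `d`. An even edge set contains a cycle through each of its edges (after deleting the
edge `d = s(x, y)`, the handshake lemma on the component of `x` forces `y` into it), and such a
cycle inside `Q₁ ∪ (C₂ \ P₂)` has `d` as its only `D`-edge.
-/

open scoped symmDiff

theorem Finset.card_symmDiff_add_two_mul_card_inter {α : Type*} [DecidableEq α]
    (s t : Finset α) : #(s ∆ t) + 2 * #(s ∩ t) = #s + #t := by
  rw [Finset.symmDiff_def, card_union_of_disjoint disjoint_sdiff_sdiff]
  have := card_sdiff_add_card_inter s t
  have := card_sdiff_add_card_inter t s
  rw [inter_comm t s] at this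
  omega

theorem Finset.card_union_inter_of_disjoint {α : Type*} [DecidableEq α] {s t : Finset α}
    (h : Disjoint s t) (u : Finset α) : #((s ∪ t) ∩ u) = #(s ∩ u) + #(t ∩ u) := by
  rw [union_inter_distrib_right,
    card_union_of_disjoint (h.mono inter_subset_left inter_subset_left)]

def edgeDegree (S : Finset (Sym2 V)) (z : V) : ℕ := #{e ∈ S | z ∈ e}

lemma edgeDegree_sdiff_add {S T : Finset (Sym2 V)} (h : T ⊆ S) (z : V) :
    edgeDegree (S \ T) z + edgeDegree T z = edgeDegree S z := by
  rw [edgeDegree, edgeDegree, ← card_union_of_disjoint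
    (disjoint_filter_filter disjoint_sdiff_self_left), ← filter_union, sdiff_union_of_subset h]
  rfl

lemma edgeDegree_symmDiff_add (S T : Finset (Sym2 V)) (z : V) :
    edgeDegree (S ∆ T) z + 2 * edgeDegree (S ∩ T) z = edgeDegree S z + edgeDegree T z := by
  have : {e ∈ S ∆ T | z ∈ e} = {e ∈ S | z ∈ e} ∆ {e ∈ T | z ∈ e} := by
    ext; simp only [mem_filter, mem_symmDiff]; tauto
  rw [edgeDegree, edgeDegree, this, filter_inter_distrib]
  exact card_symmDiff_add_two_mul_card_inter _ _

lemma edgeDegree_singleton (d : Sym2 V) (z : V) :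
    edgeDegree {d} z = if z ∈ d then 1 else 0 := by
  rw [edgeDegree, filter_singleton]; split_ifs <;> rfl

lemma List.Nodup.edgeDegree_toFinset {l : List (Sym2 V)} (hl : l.Nodup) (z : V) :
    edgeDegree l.toFinset z = l.countP (z ∈ ·) := by
  rw [edgeDegree, filter_toFinset, List.toFinset_card_of_nodup (hl.filter _),
    List.countP_eq_length_filter]

lemma SimpleGraph.Walk.IsTrail.even_edgeDegree_iff {G : SimpleGraph V} {u v : V}
    {p : G.Walk u v} (hp : p.IsTrail) (z : V) :
    Even (edgeDegree p.edges.toFinset z) ↔ u ≠ v → z ≠ u ∧ z ≠ v := by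
  rw [hp.edges_nodup.edgeDegree_toFinset]
  exact hp.even_countP_edges_iff z

lemma IsCycleEdges.even_edgeDegree {G : SimpleGraph V} {C : Finset (Sym2 V)}
    (hC : IsCycleEdges G C) (z : V) : Even (edgeDegree C z) := by
  obtain ⟨u, c, hc, rfl⟩ := hC
  simp [hc.isTrail.even_edgeDegree_iff]

lemma IsCycleEdges.subset_edgeSet {G : SimpleGraph V} {C : Finset (Sym2 V)}
    (hC : IsCycleEdges G C) : ↑C ⊆ G.edgeSet := by
  obtain ⟨u, c, -, rfl⟩ := hC
  exact fun e he => c.edges_subset_edgeSet (List.mem_toFinset.mp he)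

lemma even_sum_edgeDegree {S : Finset (Sym2 V)} (hS : ∀ e ∈ S, ¬ e.IsDiag) {T : Finset V}
    (hT : ∀ a b, s(a, b) ∈ S → a ∈ T → b ∈ T) : Even (∑ z ∈ T, edgeDegree S z) := by
  have hcount : ∑ z ∈ T, edgeDegree S z = ∑ e ∈ S, #{z ∈ T | z ∈ e} :=
    sum_card_bipartiteAbove_eq_sum_card_bipartiteBelow _
  rw [hcount]
  refine Finset.even_sum _ fun e he => ?_
  induction e with
  | h a b =>
    have hab : a ≠ b := by simpa using hS _ he
    by_cases ha : a ∈ T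
    · have hb := hT a b he ha
      have : {z ∈ T | z ∈ s(a, b)} = {a, b} := by
        ext z; simp only [mem_filter, Sym2.mem_iff, mem_insert, mem_singleton]
        constructor
        · exact And.right
        · rintro (rfl | rfl) <;> simp_all
      rw [this, card_pair hab]; exact even_two
    · have hb : b ∉ T := fun hb => ha (hT b a (Sym2.eq_swap ▸ he) hb)
      have : {z ∈ T | z ∈ s(a, b)} = ∅ := by
        ext z; simp only [mem_filter, Sym2.mem_iff, notMem_empty, iff_false]
        rintro ⟨hz, rfl | rfl⟩ <;> contradiction
      rw [this, card_empty]; exact Even.zero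

namespace SimpleGraph

lemma reachable_of_odd_edgeDegree {S : Finset (Sym2 V)} (hS : ∀ e ∈ S, ¬ e.IsDiag) {x y : V}
    (hx : Odd (edgeDegree S x)) (hodd : ∀ z, Odd (edgeDegree S z) → z = x ∨ z = y) :
    (fromEdgeSet (S : Set (Sym2 V))).Reachable x y := by
  classical
  set H := fromEdgeSet (S : Set (Sym2 V))
  by_contra hxy
  let T : Finset V := {z ∈ insert x (S.biUnion Sym2.toFinset) | H.Reachable x z}
  have hT : ∀ a b, s(a, b) ∈ S → a ∈ T → b ∈ T := by
    intro a b hab ha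
    have hadj : H.Adj a b := by simpa [H] using ⟨hab, hS _ hab⟩
    refine mem_filter.mpr ⟨mem_insert_of_mem (mem_biUnion.mpr ⟨_, hab, ?_⟩), ?_⟩
    · exact Sym2.mem_toFinset.mpr (Sym2.mem_mk_right a b)
    · exact (mem_filter.mp ha).2.trans hadj.reachable
  have hxT : x ∈ T := mem_filter.mpr ⟨mem_insert_self _ _, Reachable.refl x⟩
  have hrest : Even (∑ z ∈ T.erase x, edgeDegree S z) := by
    refine Finset.even_sum _ fun z hz => Nat.not_odd_iff_even.mp fun h => ?_
    obtain ⟨hzx, hzT⟩ := mem_erase.mp hz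
    rcases hodd z h with rfl | rfl
    · exact hzx rfl
    · exact hxy (mem_filter.mp hzT).2
  have hsum := even_sum_edgeDegree hS hT
  rw [← add_sum_erase T _ hxT] at hsum
  exact Nat.not_even_iff_odd.mpr (hx.add_even hrest) hsum

lemma exists_isCycleEdges_of_even_edgeDegree {G : SimpleGraph V} {S : Finset (Sym2 V)}
    (hS : ↑S ⊆ G.edgeSet) (heven : ∀ z, Even (edgeDegree S z)) {d : Sym2 V} (hd : d ∈ S) :
    ∃ C, IsCycleEdges G C ∧ d ∈ C ∧ C ⊆ S := by
  induction d with | h x y =>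
  have hnd : ∀ e ∈ S, ¬ e.IsDiag := fun e he => G.not_isDiag_of_mem_edgeSet (hS he)
  have hxy : x ≠ y := by simpa using hnd _ hd
  set H := fromEdgeSet (S : Set (Sym2 V))
  have hodd (z : V) : Odd (edgeDegree (S \ {s(x, y)}) z) ↔ z = x ∨ z = y := by
    have hsplit := edgeDegree_sdiff_add (singleton_subset_iff.mpr hd) z
    rw [edgeDegree_singleton] at hsplit
    have hz := heven z
    rw [Nat.even_iff] at hz
    rw [Nat.odd_iff, ← Sym2.mem_iff]
    split_ifs at hsplit with h <;> simp only [h, iff_true, iff_false] <;> omega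
  have hreach : (H.deleteEdges {s(x, y)}).Reachable x y := by
    rw [deleteEdges_fromEdgeSet, ← coe_singleton, ← coe_sdiff]
    exact reachable_of_odd_edgeDegree (fun e he => hnd e (mem_sdiff.mp he).1)
      ((hodd x).mpr (.inl rfl)) fun z hz => (hodd z).mp hz
  obtain ⟨u, c, hc, hdc⟩ :=
    adj_and_reachable_delete_edges_iff_exists_cycle.mp ⟨by simpa [H] using ⟨hd, hxy⟩, hreach⟩
  have hHG : H ≤ G := (fromEdgeSet_le (G := G)).mpr fun e he => hS he.1
  refine ⟨_, ⟨u, c.mapLe hHG, hc.mapLe hHG, rfl⟩, by simpa [Walk.edges_mapLe_eq_edges], ?_⟩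
  intro e he
  have := c.edges_subset_edgeSet (by simpa [Walk.edges_mapLe_eq_edges] using he)
  exact (by simpa [H] using this : e ∈ S ∧ _).1

namespace Walk

variable {G : SimpleGraph V} {u v w : V}

lemma mem_support_iff_mem_edgeVerts {p : G.Walk u v} (hp : ¬ p.Nil) {z : V} :
    z ∈ p.support ↔ z ∈ edgeVerts p.edges.toFinset := by
  simp [mem_support_iff_exists_mem_edges_of_not_nil hp, edgeVerts]

omit [DecidableEq V] in
lemma edges_eq_singleton_of_length_eq_one :
    ∀ {p : G.Walk u v}, p.length = 1 → p.edges = [s(u, v)]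
  | cons _ nil, _ => rfl

omit [DecidableEq V] in
lemma IsPath.start_notMem_support_tail {p : G.Walk u v} (hp : p.IsPath) :
    u ∉ p.support.tail := by
  have := hp.support_nodup
  rw [← cons_tail_support] at this
  exact (List.nodup_cons.mp this).1

lemma IsCycle.exists_isPath_partition {c : G.Walk u u} (hc : c.IsCycle) (hv : v ∈ c.support)
    (hw : w ∈ c.support) (hvw : v ≠ w) :
    ∃ p q : G.Walk v w, p.IsPath ∧ q.IsPath ∧ Disjoint p.edges.toFinset q.edges.toFinset ∧
      p.edges.toFinset ∪ q.edges.toFinset = c.edges.toFinset := by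
  set c' := c.rotate v hv
  have hw' : w ∈ c'.support := (mem_support_rotate_iff c v hv).mpr hw
  have hc' : (c'.takeUntil w hw').append (c'.dropUntil w hw') |>.IsCycle := by
    rw [take_spec]; exact hc.rotate hv
  have hnodup := hc'.edges_nodup
  rw [edges_append, List.nodup_append'] at hnodup
  refine ⟨c'.takeUntil w hw', (c'.dropUntil w hw').reverse,
    hc'.isPath_of_append_left (not_nil_of_ne hvw.symm),
    (hc'.isPath_of_append_right (not_nil_of_ne hvw)).reverse, ?_, ?_⟩
  · rw [edges_reverse, List.toFinset_reverse, List.disjoint_toFinset_iff_disjoint]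
    exact hnodup.2.2
  · rw [edges_reverse, List.toFinset_reverse, ← List.toFinset_append, ← edges_append, take_spec]
    exact List.toFinset_eq_of_perm _ _ (rotate_edges c v hv).perm

lemma IsCycle.exists_isPath_partition_card_inter {c : G.Walk u u} (hc : c.IsCycle)
    (hv : v ∈ c.support) (hw : w ∈ c.support) (hvw : v ≠ w) {D : Finset (Sym2 V)}
    (hD : #(c.edges.toFinset ∩ D) = 1) {n : ℕ} (hn : n ≤ 1) :
    ∃ p q : G.Walk v w, p.IsPath ∧ q.IsPath ∧ Disjoint p.edges.toFinset q.edges.toFinset ∧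
      p.edges.toFinset ∪ q.edges.toFinset = c.edges.toFinset ∧
      #(p.edges.toFinset ∩ D) + n = 1 ∧ #(q.edges.toFinset ∩ D) = n := by
  obtain ⟨p, q, hp, hq, hpq, hc⟩ := hc.exists_isPath_partition hv hw hvw
  have hpqD := card_union_inter_of_disjoint hpq D
  rw [hc, hD] at hpqD
  by_cases h : #(p.edges.toFinset ∩ D) + n = 1
  · exact ⟨p, q, hp, hq, hpq, hc, h, by omega⟩
  · refine ⟨q, p, hq, hp, hpq.symm, union_comm p.edges.toFinset _ ▸ hc, ?_, ?_⟩ <;> omega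

lemma IsPath.isCycleEdges_union {p q : G.Walk v w} (hp : p.IsPath) (hq : q.IsPath) (hvw : v ≠ w)
    (hmeet : edgeVerts p.edges.toFinset ∩ edgeVerts q.edges.toFinset ⊆ {v, w})
    (hne : p.edges.toFinset ≠ q.edges.toFinset) :
    IsCycleEdges G (p.edges.toFinset ∪ q.edges.toFinset) ∧
      Disjoint p.edges.toFinset q.edges.toFinset := by
  have hmeet' : ∀ z ∈ p.support, z ∈ q.support → z = v ∨ z = w := fun z hzp hzq => by
    simpa using hmeet ⟨(mem_support_iff_mem_edgeVerts (not_nil_of_ne hvw)).mp hzp,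
      (mem_support_iff_mem_edgeVerts (not_nil_of_ne hvw)).mp hzq⟩
  have hc : (p.append q.reverse).IsCycle := by
    refine hp.isCycle_append hq.reverse (fun z hzp hzq => ?_) ?_
    · have hzq' : z ∈ q.support := by simpa using List.mem_of_mem_tail hzq
      rcases hmeet' z (List.mem_of_mem_tail hzp) hzq' with rfl | rfl
      · exact hp.start_notMem_support_tail hzp
      · exact hq.reverse.start_notMem_support_tail hzq
    · -- otherwise both would be the single edge `s(v, w)`
      by_contra! hlen
      have h1 (r : G.Walk v w) (hr : r.length ≤ 1) : r.edges = [s(v, w)] :=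
        edges_eq_singleton_of_length_eq_one (le_antisymm hr
          (Nat.one_le_iff_ne_zero.mpr fun h => hvw (eq_of_length_eq_zero h)))
      exact hne (by rw [h1 p hlen.1, h1 q (by simpa using hlen.2)])
  refine ⟨⟨v, _, hc, by simp [edges_append]⟩, ?_⟩
  have := ((isTrail_append _ _).mp hc.isTrail).2.2
  rwa [edges_reverse, List.disjoint_reverse_right, ← List.disjoint_toFinset_iff_disjoint] at this

lemma IsTrail.even_edgeDegree_add_sdiff {p q : G.Walk v w} (hp : p.IsTrail) (hq : q.IsTrail)
    {C : Finset (Sym2 V)} (hC : IsCycleEdges G C) (hqC : q.edges.toFinset ⊆ C) (z : V) :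
    Even (edgeDegree p.edges.toFinset z + edgeDegree (C \ q.edges.toFinset) z) := by
  have hCz := hC.even_edgeDegree z
  rw [← edgeDegree_sdiff_add hqC, Nat.even_add] at hCz
  have hpq : Even (edgeDegree p.edges.toFinset z) ↔ Even (edgeDegree q.edges.toFinset z) := by
    rw [hp.even_edgeDegree_iff, hq.even_edgeDegree_iff]
  rw [Nat.even_add]
  tauto

end Walk

lemma exists_isCycleEdges_card_inter_eq_one {G : SimpleGraph V} {Y Z D : Finset (Sym2 V)}
    (hY : ↑Y ⊆ G.edgeSet) (hZ : ↑Z ⊆ G.edgeSet)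
    (heven : ∀ z, Even (edgeDegree Y z + edgeDegree Z z)) (hD : #(Y ∩ D) + #(Z ∩ D) = 1) :
    ∃ C, IsCycleEdges G C ∧ #(C ∩ D) = 1 ∧ C ⊆ Y ∪ Z := by
  obtain ⟨d, hYZD, hd⟩ : ∃ d, (Y ∪ Z) ∩ D = {d} ∧ d ∉ Y ∩ Z := by
    have h := card_union_add_card_inter (Y ∩ D) (Z ∩ D)
    rw [← union_inter_distrib_right, ← inter_inter_distrib_right, hD] at h
    have hle : #((Y ∩ Z) ∩ D) ≤ #((Y ∪ Z) ∩ D) :=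
      card_le_card (inter_subset_inter_right inter_subset_union)
    obtain ⟨d, hd⟩ := card_eq_one.mp (by omega : #((Y ∪ Z) ∩ D) = 1)
    have h0 : (Y ∩ Z) ∩ D = ∅ := card_eq_zero.mp (by omega)
    refine ⟨d, hd, fun hdYZ => notMem_empty d (h0 ▸ mem_inter.mpr ⟨hdYZ, ?_⟩)⟩
    exact (mem_inter.mp (hd ▸ mem_singleton_self d : d ∈ (Y ∪ Z) ∩ D)).2
  have hdD : d ∈ (Y ∪ Z) ∩ D := hYZD ▸ mem_singleton_self d
  have hdS : d ∈ Y ∆ Z := by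
    rw [symmDiff_eq_sup_sdiff_inf]; exact mem_sdiff.mpr ⟨(mem_inter.mp hdD).1, hd⟩
  have hS : ↑(Y ∆ Z) ⊆ G.edgeSet := by
    rw [coe_symmDiff]; exact Set.symmDiff_subset_union.trans (Set.union_subset hY hZ)
  have hSeven (z : V) : Even (edgeDegree (Y ∆ Z) z) := by
    have := edgeDegree_symmDiff_add Y Z z
    have := heven z
    rw [Nat.even_iff] at *
    omega
  obtain ⟨C, hC, hdC, hCS⟩ := exists_isCycleEdges_of_even_edgeDegree hS hSeven hdS
  have hCYZ : C ⊆ Y ∪ Z := hCS.trans symmDiff_subset_union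
  have hCD : C ∩ D ⊆ {d} := hYZD ▸ inter_subset_inter_right hCYZ
  refine ⟨C, hC, le_antisymm ((card_le_card hCD).trans_eq (card_singleton d)) ?_, hCYZ⟩
  exact card_pos.mpr ⟨d, mem_inter.mpr ⟨hdC, (mem_inter.mp hdD).2⟩⟩

end SimpleGraph

open SimpleGraph

theorem dCycles_uncrossable_general (G : SimpleGraph V) (D : Finset (Sym2 V)) :
    Uncrossable G {s | IsCycleEdges G s ∧ (s ∩ D).card = 1} := by
  rintro C₁ ⟨⟨u₁, c₁, hc₁, rfl⟩, hC₁D⟩ C₂ ⟨hC₂, hC₂D⟩ v w hvw _ ⟨p₂, hp₂, rfl⟩ hP₂C₂ hmeet hv hw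
  rw [← Walk.mem_support_iff_mem_edgeVerts hc₁.not_nil] at hv hw
  have hP₂D :=
    card_union_inter_of_disjoint (disjoint_sdiff_self_left (x := p₂.edges.toFinset) (y := C₂)) D
  rw [sdiff_union_of_subset hP₂C₂, hC₂D] at hP₂D
  obtain ⟨p, q, hp, hq, hpq, hC₁, hpD, hqD⟩ := hc₁.exists_isPath_partition_card_inter hv hw hvw
    hC₁D (n := #(p₂.edges.toFinset ∩ D)) (by omega)
  have hmeet' : edgeVerts p.edges.toFinset ∩ edgeVerts p₂.edges.toFinset ⊆ {v, w} :=
    fun z ⟨⟨e, he, hz⟩, hz₂⟩ => hmeet ⟨hz₂, e, hC₁ ▸ mem_union_left _ he, hz⟩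
  obtain ⟨hcyc, hdisj⟩ := hp.isCycleEdges_union hp₂ hvw hmeet' fun h => by rw [h] at hpD; omega
  obtain ⟨C, hC, hCD, hCsub⟩ := exists_isCycleEdges_card_inter_eq_one (D := D)
    (fun e he => q.edges_subset_edgeSet (List.mem_toFinset.mp he))
    (fun e he => hC₂.subset_edgeSet (mem_sdiff.mp he).1)
    (hq.isTrail.even_edgeDegree_add_sdiff hp₂.isTrail hC₂ hP₂C₂) (by omega)
  refine ⟨p.edges.toFinset, ⟨p, hp, rfl⟩, hC₁ ▸ subset_union_left,
    ⟨hcyc, by rw [card_union_inter_of_disjoint hdisj]; omega⟩,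
    C, ⟨hC, hCD⟩, hCsub.trans (union_subset_union ?_ subset_rfl)⟩
  exact hC₁ ▸ subset_sdiff.mpr ⟨subset_union_right, hpq.symm⟩

/-- For `D ⊆ E`, the family of `D`-cycles (cycles containing exactly one edge of `D`)
is uncrossable. -/
theorem dCycles_uncrossable (G : SimpleGraph V) (D : Finset (Sym2 V))
    (hD : ↑D ⊆ G.edgeSet) :
    Uncrossable G {s | IsCycleEdges G s ∧ (s ∩ D).card = 1} :=
  dCycles_uncrossable_general G D
end

section
/- Let G be a 2-vertex-connected undirected graph that contains at least one odd cycle. Then every edge of G belongs to some odd cycle. -/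
open Finset

variable {V : Type*} [DecidableEq V] [Fintype V]

/-- A graph is 2-vertex-connected: it has at least 3 vertices and deleting any single
vertex leaves a connected graph. -/
def TwoConnected (G : SimpleGraph V) : Prop :=
  3 ≤ Fintype.card V ∧ ∀ v : V, (G.induce {x | x ≠ v}).Connected


/-! Let `v` lie on an odd cycle `C` and let `vw` be an edge not on `C`. Since `G - v` is connected,
there is a path from `w` to `C` avoiding `v`; cut it at its first vertex `q` on `C`. The two arcs
of `C` between `q` and `v` have lengths of different parity, so one of them, followed by `vw` and
the path, closes an odd cycle through `vw`. Thus every neighbour of a vertex on an odd cycle lies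
on an odd cycle too, and since `G` is connected, every vertex and then every edge does. -/

namespace SimpleGraph

variable {V : Type*} {G : SimpleGraph V}

lemma exists_walk_forall_mem_support_of_preconnected_induce {s : Set V}
    (hs : (G.induce s).Preconnected) {a b : V} (ha : a ∈ s) (hb : b ∈ s) :
    ∃ p : G.Walk a b, ∀ x ∈ p.support, x ∈ s := by
  obtain ⟨p⟩ := hs ⟨a, ha⟩ ⟨b, hb⟩
  have hp : ∀ x ∈ (p.map (Embedding.induce s).toHom).support, x ∈ s := by
    intro x hx
    rw [Walk.support_map, List.mem_map] at hx
    obtain ⟨y, -, rfl⟩ := hx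
    exact y.2
  exact ⟨_, hp⟩

namespace Walk

variable {u v w : V}

lemma exists_walk_to_first_mem {S : Set V} (p : G.Walk u v) (hv : v ∈ S) :
    ∃ x ∈ S, ∃ q : G.Walk u x, q.support ⊆ p.support ∧ ∀ y ∈ q.support, y ∈ S → y = x := by
  induction p with
  | nil => exact ⟨_, hv, nil, by simp, by simp⟩
  | @cons a _ _ h p ih =>
    by_cases ha : a ∈ S
    · exact ⟨a, ha, nil, by simp, by simp⟩
    obtain ⟨x, hx, q, hqp, hqS⟩ := ih hv
    refine ⟨x, hx, cons h q, by simpa using List.cons_subset_cons a hqp, ?_⟩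
    simp only [support_cons, List.mem_cons, forall_eq_or_imp]
    exact ⟨fun h => absurd h ha, hqS⟩

lemma exists_isPath_to_first_mem [DecidableEq V] {S : Set V} (p : G.Walk u v) (hv : v ∈ S) :
    ∃ x ∈ S, ∃ q : G.Walk u x, q.IsPath ∧ q.support ⊆ p.support ∧
      ∀ y ∈ q.support, y ∈ S → y = x := by
  obtain ⟨x, hx, q, hqp, hqS⟩ := p.exists_walk_to_first_mem hv
  exact ⟨x, hx, q.bypass, q.bypass_isPath, fun y hy => hqp (q.support_bypass_subset_support hy),
    fun y hy => hqS y (q.support_bypass_subset_support hy)⟩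

lemma IsTrail.card_toFinset_edges [DecidableEq V] {p : G.Walk u v} (hp : p.IsTrail) :
    p.edges.toFinset.card = p.length := by
  rw [List.toFinset_card_of_nodup hp.edges_nodup, length_edges]

lemma IsPath.append {p : G.Walk u v} {q : G.Walk v w} (hp : p.IsPath) (hq : q.IsPath)
    (hpq : ∀ x ∈ p.support, x ∈ q.support → x = v) : (p.append q).IsPath := by
  rw [isPath_def, support_append, List.nodup_append]
  refine ⟨hp.support_nodup, hq.support_nodup.sublist q.support.tail_sublist, ?_⟩
  rintro x hxp y hyq rfl
  have hqv := hq.support_nodup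
  rw [← cons_tail_support, List.nodup_cons] at hqv
  exact hqv.1 (hpq x hxp (List.mem_of_mem_tail hyq) ▸ hyq)

lemma IsCycle.exists_isPath_even_add [DecidableEq V] {c : G.Walk v v} (hc : c.IsCycle)
    (hodd : Odd c.length) {q : V} (hq : q ∈ c.support) (hqv : q ≠ v) (n : ℕ) :
    ∃ p : G.Walk q v, p.IsPath ∧ p.support ⊆ c.support ∧ p.edges ⊆ c.edges ∧
      Even (n + p.length) := by
  have hsplit := c.take_spec hq
  have hlen : (c.takeUntil q hq).length + (c.dropUntil q hq).length = c.length := by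
    rw [← length_append, hsplit]
  rcases Nat.even_or_odd (n + (c.dropUntil q hq).length) with heven | hodd'
  · refine ⟨c.dropUntil q hq, ?_, c.support_dropUntil_subset_support hq,
      c.edges_dropUntil_subset_edges hq, heven⟩
    exact (hsplit ▸ hc).isPath_of_append_right (not_nil_of_ne hqv.symm)
  · refine ⟨(c.takeUntil q hq).reverse, (hc.isPath_takeUntil hq).reverse, ?_, ?_, ?_⟩
    · simpa using c.support_takeUntil_subset_support hq
    · simpa using c.edges_takeUntil_subset_edges hq
    · rw [length_reverse]
      grind

end Walk

open Walk

lemma exists_odd_cycle_mem_edges [DecidableEq V] {u v w : V}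
    (hconn : (G.induce {x | x ≠ v}).Preconnected) {c : G.Walk u u} (hc : c.IsCycle)
    (hodd : Odd c.length) (hv : v ∈ c.support) (hvw : G.Adj v w) :
    ∃ (x : V) (c' : G.Walk x x), c'.IsCycle ∧ Odd c'.length ∧ s(v, w) ∈ c'.edges := by
  obtain ⟨c, hc, hodd⟩ : ∃ c : G.Walk v v, c.IsCycle ∧ Odd c.length :=
    ⟨c.rotate v hv, hc.rotate hv, by rwa [length_rotate]⟩
  by_cases he : s(v, w) ∈ c.edges
  · exact ⟨v, c, hc, hodd, he⟩
  obtain ⟨r, hr⟩ := exists_walk_forall_mem_support_of_preconnected_induce hconn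
    (s := {x | x ≠ v}) hvw.ne' (c.adj_snd hc.not_nil).ne'
  obtain ⟨q, hq, Q, hQ, hQr, hQc⟩ :=
    r.exists_isPath_to_first_mem (S := {x | x ∈ c.support}) (c.getVert_mem_support 1)
  have hvQ : v ∉ Q.support := fun h => hr v (hQr h) rfl
  obtain ⟨X, hX, hXc, hXe, heven⟩ :=
    hc.exists_isPath_even_add hodd hq (fun h => hvQ (h ▸ Q.end_mem_support)) Q.length
  have hP : (Q.append X).IsPath := hQ.append hX fun x hx hxX => hQc x hx (hXc hxX)
  refine ⟨v, cons hvw (Q.append X), ?_, ?_, by simp⟩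
  · refine (cons_isCycle_iff _ hvw).mpr ⟨hP, ?_⟩
    rw [edges_append, List.mem_append, not_or]
    exact ⟨fun h => hvQ (Q.fst_mem_support_of_mem_edges h), fun h => he (hXe h)⟩
  · rw [length_cons, length_append]
    exact heven.add_one

end SimpleGraph

namespace TwoConnected

open SimpleGraph

variable {V : Type*} [Fintype V] {G : SimpleGraph V}

theorem connected (h : TwoConnected G) : G.Connected := by
  classical
  have : Nonempty V := Fintype.card_pos_iff.mp (by have := h.1; omega)
  refine ⟨fun x y => ?_⟩
  obtain ⟨z, -, hz⟩ := Finset.exists_mem_notMem_of_card_lt_card (s := {x, y}) (t := Finset.univ)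
    (Finset.card_le_two.trans_lt (Finset.card_univ (α := V) ▸ h.1))
  simp only [Finset.mem_insert, Finset.mem_singleton, not_or] at hz
  obtain ⟨p, -⟩ := exists_walk_forall_mem_support_of_preconnected_induce (h.2 z).preconnected
    (Ne.symm hz.1) (Ne.symm hz.2)
  exact ⟨p⟩

theorem exists_odd_cycle_mem_support [DecidableEq V] (h : TwoConnected G) {u : V}
    {c : G.Walk u u} (hc : c.IsCycle) (hodd : Odd c.length) (x : V) :
    ∃ (y : V) (c' : G.Walk y y), c'.IsCycle ∧ Odd c'.length ∧ x ∈ c'.support := by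
  have hu : ∃ (y : V) (c' : G.Walk y y), c'.IsCycle ∧ Odd c'.length ∧ u ∈ c'.support :=
    ⟨u, c, hc, hodd, c.start_mem_support⟩
  clear hc hodd c
  obtain ⟨p⟩ := h.connected.preconnected x u
  induction p with
  | nil => exact hu
  | cons hxy _ ih =>
    obtain ⟨y, c, hc, hodd, hy⟩ := ih hu
    obtain ⟨z, c', hc', hodd', he⟩ :=
      exists_odd_cycle_mem_edges (h.2 _).preconnected hc hodd hy hxy.symm
    exact ⟨z, c', hc', hodd', c'.snd_mem_support_of_mem_edges he⟩

end TwoConnected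

/-- In a 2-vertex-connected graph that contains an odd cycle, every edge belongs to
some odd cycle. -/
theorem every_edge_in_odd_cycle (G : SimpleGraph V) (h2 : TwoConnected G)
    (hodd : ∃ s : Finset (Sym2 V), IsCycleEdges G s ∧ Odd s.card) :
    ∀ e ∈ G.edgeSet, ∃ s : Finset (Sym2 V), IsCycleEdges G s ∧ Odd s.card ∧ e ∈ s := by
  obtain ⟨-, ⟨u, c, hc, rfl⟩, hodd⟩ := hodd
  rw [hc.isTrail.card_toFinset_edges] at hodd
  intro e he
  induction e using Sym2.ind with
  | _ v w =>
    obtain ⟨x, c', hc', hodd', hv⟩ := h2.exists_odd_cycle_mem_support hc hodd v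
    obtain ⟨y, c'', hc'', hodd'', hvw⟩ :=
      SimpleGraph.exists_odd_cycle_mem_edges (h2.2 v).preconnected hc' hodd' hv he
    exact ⟨_, ⟨y, c'', hc'', rfl⟩, by rwa [hc''.isTrail.card_toFinset_edges],
      List.mem_toFinset.mpr hvw⟩
end

section
/- Let 𝒞 be an uncrossable family of cycles in a graph, C₁, C₂ ∈ 𝒞, v and w two vertices, P₁ a v-w-path contained in C₁, and P₂ a v-w-path contained in C₂. Then at least one of the two edge sets P₁ + P₂ and P₁ + (C₂ − P₂) contains a cycle of 𝒞. -/
/-!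
Induction on the length of `P₁`. Walk along `P₁` from `v` to the first vertex `x ≠ v` of `C₂`.
The initial segment `A` meets `C₂` only in `v` and `x`, so uncrossability, with the roles of `C₁`
and `C₂` exchanged, gives a `v`-`x`-path `S ⊆ C₂` with `S + A ∈ 𝒞`. One of the two
`v`-`w`-paths `P₂`, `C₂ − P₂` of `C₂` passes through `x`; call it `R = R₁ + R₂`, split at `x`.
Since `R₁` and `C₂ − R₁` are the only `v`-`x`-paths in `C₂`, either `S = R₁`, and then
`S + A ⊆ P₁ + R`, or `R₂ ⊆ S + A`, and then the induction hypothesis for the cycles `C₁`,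
`S + A` and the remainder `B` of `P₁` concludes, because `B + R₂ ⊆ P₁ + R` and
`B + ((S + A) − R₂) ⊆ P₁ + (C₂ − R)`.
-/

open Finset

variable {V : Type*} [DecidableEq V]

/-- An edge set is good (w.r.t. a family `𝒞` of cycles) if it contains the edge set of a
cycle in `𝒞`. -/
def Good (𝒞 : Set (Finset (Sym2 V))) (s : Finset (Sym2 V)) : Prop :=
  ∃ C ∈ 𝒞, C ⊆ s

namespace SimpleGraph.Walk

variable {G : SimpleGraph V}

omit [DecidableEq V] in
theorem edges_subset_of_cons_subset_cons {a y b x : V} {h : G.Adj a y} {q : G.Walk y b}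
    {r : G.Walk y x} (ha : a ∉ q.support) (hqr : (cons h q).edges ⊆ (cons h r).edges) :
    q.edges ⊆ r.edges := fun f hf => by
  have hf' := hqr (List.mem_cons_of_mem _ hf)
  rw [edges_cons, List.mem_cons] at hf'
  refine hf'.resolve_left ?_
  rintro rfl
  exact ha (q.fst_mem_support_of_mem_edges hf)

theorem IsPath.eq_takeUntil_of_edges_subset {u b x : V} {q : G.Walk u b} {r : G.Walk u x}
    (hq : q.IsPath) (hr : r.IsPath) (hqr : q.edges ⊆ r.edges) :
    ∃ hb : b ∈ r.support, q = r.takeUntil b hb := by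
  induction q generalizing x with
  | nil => exact ⟨r.start_mem_support, by simp⟩
  | @cons u y b huy q ih =>
    rw [cons_isPath_iff] at hq
    cases r with
    | nil => simp at hqr
    | @cons _ y' _ huy' r =>
      rw [cons_isPath_iff] at hr
      obtain rfl : y = y' := by
        have h := hqr (List.mem_cons_self ..)
        rw [edges_cons, List.mem_cons] at h
        rcases h with h | h
        · exact Sym2.congr_right.mp h
        · exact absurd (r.fst_mem_support_of_mem_edges h) hr.2
      obtain ⟨hb, rfl⟩ := ih hq.1 hr.1 (edges_subset_of_cons_subset_cons hq.2 hqr)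
      have hub : u ≠ b := fun h => hq.2 (h ▸ (r.takeUntil b hb).end_mem_support)
      exact ⟨List.mem_cons_of_mem _ hb, (takeUntil_cons hb hub huy').symm⟩

omit [DecidableEq V] in
theorem IsCycle.eq_snd_or_eq_penultimate_of_mem_edges {a y : V} {c : G.Walk a a}
    (hc : c.IsCycle) (hmem : s(a, y) ∈ c.edges) : y = c.snd ∨ y = c.penultimate := by
  have hnil := hc.not_nil
  rw [← c.cons_tail_eq hnil, edges_cons, List.mem_cons] at hmem
  rcases hmem with h | h
  · exact Or.inl (Sym2.congr_right.mp h)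
  · refine Or.inr ((hc.isPath_tail.eq_penultimate_of_mem_edges h).trans ?_)
    conv_rhs => rw [← c.cons_tail_eq hnil]
    refine (penultimate_cons_of_not_nil _ _ ?_).symm
    exact fun h => (c.adj_snd hnil).ne h.eq.symm

theorem IsCycle.eq_takeUntil_of_snd_eq {a b : V} {c : G.Walk a a} (hc : c.IsCycle)
    {q : G.Walk a b} (hq : q.IsPath) (hqc : q.edges ⊆ c.edges) (hsnd : q.snd = c.snd)
    (hb : b ∈ c.support) : q = c.takeUntil b hb := by
  cases q with
  | nil => simp
  | @cons _ y _ hay q =>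
    rw [cons_isPath_iff] at hq
    cases c with
    | nil => exact absurd hc not_isCycle_nil
    | @cons _ y' _ hay' c =>
      rw [cons_isCycle_iff] at hc
      obtain rfl : y = y' := by simpa using hsnd
      obtain ⟨hb', rfl⟩ :=
        hq.1.eq_takeUntil_of_edges_subset hc.1 (edges_subset_of_cons_subset_cons hq.2 hqc)
      have hab : a ≠ b := fun h => hq.2 (h ▸ (c.takeUntil b hb').end_mem_support)
      exact (takeUntil_cons hb' hab hay').symm

theorem IsPath.takeUntil_end_eq {u v : V} {p : G.Walk u v} (hp : p.IsPath) (h : v ∈ p.support) :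
    p.takeUntil v h = p := by
  have hnil : p.dropUntil v h = .nil := (isPath_iff_nil.mp (hp.dropUntil h)).eq_nil
  conv_rhs => rw [← p.take_spec h, hnil, append_nil]

theorem takeUntil_reverse_of_isPath_dropUntil {u v x : V} (p : G.Walk u v)
    (hx : x ∈ p.support) (hp : (p.dropUntil x hx).IsPath) (hx' : x ∈ p.reverse.support) :
    p.reverse.takeUntil x hx' = (p.dropUntil x hx).reverse := by
  have hsplit : p.reverse = (p.dropUntil x hx).reverse.append (p.takeUntil x hx).reverse := by
    rw [← reverse_append, take_spec]
  rw! [hsplit]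
  rw [takeUntil_append_of_mem_left _ _ (end_mem_support _), hp.reverse.takeUntil_end_eq]

theorem IsCycle.isPath_dropUntil {a b : V} {c : G.Walk a a} (hc : c.IsCycle)
    (hb : b ∈ c.support) (hba : b ≠ a) : (c.dropUntil b hb).IsPath := by
  rw [← c.take_spec hb] at hc
  exact hc.isPath_of_append_right (by simpa using hba.symm)

theorem IsCycle.eq_takeUntil_or_eq_reverse_dropUntil {a b : V} {c : G.Walk a a}
    (hc : c.IsCycle) {q : G.Walk a b} (hq : q.IsPath) (hqc : q.edges ⊆ c.edges) (hab : a ≠ b)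
    (hb : b ∈ c.support) : q = c.takeUntil b hb ∨ q = (c.dropUntil b hb).reverse := by
  have hqnil : ¬ q.Nil := fun h => hab h.eq
  rcases hc.eq_snd_or_eq_penultimate_of_mem_edges (hqc (mk_start_snd_mem_edges hqnil))
    with hsnd | hsnd
  · exact Or.inl (hc.eq_takeUntil_of_snd_eq hq hqc hsnd hb)
  · right
    rw [← c.takeUntil_reverse_of_isPath_dropUntil hb (hc.isPath_dropUntil hb hab.symm)
      (by simpa using hb)]
    refine hc.reverse.eq_takeUntil_of_snd_eq hq (fun f hf => ?_) (by rw [snd_reverse, hsnd]) _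
    simpa using hqc hf

theorem edges_toFinset_takeUntil_union_dropUntil {u v x : V} (p : G.Walk u v)
    (hx : x ∈ p.support) :
    (p.takeUntil x hx).edges.toFinset ∪ (p.dropUntil x hx).edges.toFinset = p.edges.toFinset := by
  rw [← List.toFinset_append, ← edges_append, take_spec]

theorem mem_support_of_mem_edgeVerts {u v x : V} {p : G.Walk u v}
    (hx : x ∈ edgeVerts p.edges.toFinset) : x ∈ p.support := by
  obtain ⟨e, he, hxe⟩ := hx
  exact p.mem_support_of_mem_edges (List.mem_toFinset.mp he) hxe

theorem exists_mem_support_forall_mem_takeUntil {u v : V} (p : G.Walk u v) (S : Set V)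
    (h : ∃ y ∈ p.support, y ∈ S) :
    ∃ x ∈ S, ∃ hx : x ∈ p.support, ∀ y ∈ (p.takeUntil x hx).support, y ∈ S → y = x := by
  classical
  obtain ⟨y, hy, hyS⟩ := h
  obtain ⟨x, hxS, hx, hfirst⟩ := p.exists_mem_support_forall_mem_support_imp_eq
    {y ∈ p.support.toFinset | y ∈ S} ⟨y, by simp [hy, hyS]⟩
  refine ⟨x, (Finset.mem_filter.mp hxS).2, hx, fun y hy hyS => hfirst y ?_ hy⟩
  simp [p.support_takeUntil_subset_support hx hy, hyS]

end SimpleGraph.Walk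

open SimpleGraph Walk

section EdgeSets

variable {G : SimpleGraph V}

omit [DecidableEq V] in
theorem edgeVerts_mono {s t : Finset (Sym2 V)} (h : s ⊆ t) : edgeVerts s ⊆ edgeVerts t :=
  fun _ ⟨e, he, hx⟩ => ⟨e, h he, hx⟩

theorem edgeVerts_union (s t : Finset (Sym2 V)) :
    edgeVerts (s ∪ t) = edgeVerts s ∪ edgeVerts t := by
  ext x
  simp only [edgeVerts, Set.mem_ofPred_eq, Set.mem_union, Finset.mem_union, or_and_right,
    exists_or]

theorem IsPathEdges.symm {a b : V} {P : Finset (Sym2 V)} (hP : IsPathEdges G a b P) :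
    IsPathEdges G b a P := by
  obtain ⟨p, hp, rfl⟩ := hP
  exact ⟨p.reverse, hp.reverse, by simp⟩

theorem IsPathEdges.left_mem_edgeVerts {a b : V} {P : Finset (Sym2 V)}
    (hP : IsPathEdges G a b P) (hab : a ≠ b) : a ∈ edgeVerts P := by
  obtain ⟨p, -, rfl⟩ := hP
  have hnil : ¬ p.Nil := fun h => hab h.eq
  exact ⟨_, List.mem_toFinset.mpr (mk_start_snd_mem_edges hnil), Sym2.mem_mk_left _ _⟩

theorem IsPathEdges.right_mem_edgeVerts {a b : V} {P : Finset (Sym2 V)}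
    (hP : IsPathEdges G a b P) (hab : a ≠ b) : b ∈ edgeVerts P :=
  hP.symm.left_mem_edgeVerts hab.symm

theorem IsPathEdges.exists_split {v w x : V} {R : Finset (Sym2 V)} (hR : IsPathEdges G v w R)
    (hx : x ∈ edgeVerts R) :
    ∃ Ra Rb, IsPathEdges G v x Ra ∧ IsPathEdges G x w Rb ∧ Disjoint Ra Rb ∧ Ra ∪ Rb = R := by
  obtain ⟨r, hr, rfl⟩ := hR
  have hx' := mem_support_of_mem_edgeVerts hx
  exact ⟨_, _, ⟨_, hr.takeUntil hx', rfl⟩, ⟨_, hr.dropUntil hx', rfl⟩,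
    List.disjoint_toFinset_iff_disjoint.mpr (hr.isTrail.disjoint_edges_takeUntil_dropUntil hx'),
    r.edges_toFinset_takeUntil_union_dropUntil hx'⟩

theorem IsCycleEdges.exists_arcs {C : Finset (Sym2 V)} (hC : IsCycleEdges G C) {a b : V}
    (hab : a ≠ b) (ha : a ∈ edgeVerts C) (hb : b ∈ edgeVerts C) :
    ∃ A B, Disjoint A B ∧ A ∪ B = C ∧ IsPathEdges G a b A ∧ IsPathEdges G a b B ∧
      ∀ Q, IsPathEdges G a b Q → Q ⊆ C → Q = A ∨ Q = B := by
  obtain ⟨u, c, hc, rfl⟩ := hC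
  have ha' := mem_support_of_mem_edgeVerts ha
  have hd : (c.rotate a ha').IsCycle := hc.rotate ha'
  have hdc : (c.rotate a ha').edges.toFinset = c.edges.toFinset :=
    List.toFinset_eq_of_perm _ _ (c.rotate_edges a ha').perm
  have hb' : b ∈ (c.rotate a ha').support := mem_support_of_mem_edgeVerts (hdc ▸ hb)
  refine ⟨_, _, List.disjoint_toFinset_iff_disjoint.mpr
      (hd.isTrail.disjoint_edges_takeUntil_dropUntil hb'),
    (edges_toFinset_takeUntil_union_dropUntil _ hb').trans hdc,
    ⟨_, hd.isPath_takeUntil hb', rfl⟩,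
    ⟨_, (hd.isPath_dropUntil hb' hab.symm).reverse, by simp⟩, ?_⟩
  rintro Q ⟨q, hq, rfl⟩ hQ
  have hqd : q.edges ⊆ (c.rotate a ha').edges := fun f hf => by
    simpa [← List.mem_toFinset, hdc] using hQ (List.mem_toFinset.mpr hf)
  rcases hd.eq_takeUntil_or_eq_reverse_dropUntil hq hqd hab hb' with rfl | rfl
  · exact Or.inl rfl
  · exact Or.inr (by simp)

theorem IsCycleEdges.isPathEdges_sdiff {C Q : Finset (Sym2 V)} (hC : IsCycleEdges G C)
    {a b : V} (hab : a ≠ b) (hQ : IsPathEdges G a b Q) (hQC : Q ⊆ C) :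
    IsPathEdges G a b (C \ Q) := by
  obtain ⟨A, B, hAB, rfl, hA, hB, harc⟩ := hC.exists_arcs hab
    (edgeVerts_mono hQC (hQ.left_mem_edgeVerts hab))
    (edgeVerts_mono hQC (hQ.right_mem_edgeVerts hab))
  rcases harc Q hQ hQC with rfl | rfl
  · rwa [union_sdiff_cancel_left hAB]
  · rwa [union_sdiff_cancel_right hAB]

theorem IsCycleEdges.eq_or_eq_sdiff {C Q Q' : Finset (Sym2 V)} (hC : IsCycleEdges G C)
    {a b : V} (hab : a ≠ b) (hQ : IsPathEdges G a b Q) (hQC : Q ⊆ C)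
    (hQ' : IsPathEdges G a b Q') (hQ'C : Q' ⊆ C) : Q' = Q ∨ Q' = C \ Q := by
  obtain ⟨A, B, hAB, rfl, -, -, harc⟩ := hC.exists_arcs hab
    (edgeVerts_mono hQC (hQ.left_mem_edgeVerts hab))
    (edgeVerts_mono hQC (hQ.right_mem_edgeVerts hab))
  rcases harc Q hQ hQC with rfl | rfl <;> rcases harc Q' hQ' hQ'C with rfl | rfl <;>
    simp [union_sdiff_cancel_left hAB, union_sdiff_cancel_right hAB]

omit [DecidableEq V] in
theorem Good.mono {𝒞 : Set (Finset (Sym2 V))} {s t : Finset (Sym2 V)} (hs : Good 𝒞 s)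
    (hst : s ⊆ t) : Good 𝒞 t :=
  let ⟨C, hC, hCs⟩ := hs
  ⟨C, hC, hCs.trans hst⟩

end EdgeSets

section Uncrossable

variable {G : SimpleGraph V} {𝒞 : Set (Finset (Sym2 V))}

theorem good_union_or_good_union_sdiff_of_split {C₂ A B S R : Finset (Sym2 V)}
    (hC₂ : IsCycleEdges G C₂) {v x w : V} (hvx : v ≠ x)
    (hS : IsPathEdges G v x S) (hSC₂ : S ⊆ C₂) (hSA : S ∪ A ∈ 𝒞)
    (hR : IsPathEdges G v w R) (hRC₂ : R ⊆ C₂) (hxR : x ∈ edgeVerts R)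
    (ih : ∀ P, IsPathEdges G x w P → P ⊆ S ∪ A →
      Good 𝒞 (B ∪ P) ∨ Good 𝒞 (B ∪ ((S ∪ A) \ P))) :
    Good 𝒞 (A ∪ B ∪ R) ∨ Good 𝒞 (A ∪ B ∪ (C₂ \ R)) := by
  obtain ⟨Ra, Rb, hRa, hRb, hRab, rfl⟩ := hR.exists_split hxR
  rcases hC₂.eq_or_eq_sdiff hvx hRa (subset_union_left.trans hRC₂) hS hSC₂ with rfl | rfl
  · refine Or.inl ⟨S ∪ A, hSA, fun f => ?_⟩
    simp only [mem_union]
    tauto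
  · have hRbS : Rb ⊆ (C₂ \ Ra) ∪ A := fun f hf =>
      mem_union_left _ (mem_sdiff.mpr ⟨hRC₂ (mem_union_right _ hf), disjoint_right.mp hRab hf⟩)
    refine (ih Rb hRb hRbS).imp (fun hg => hg.mono fun f => ?_) (fun hg => hg.mono fun f => ?_)
    all_goals simp only [mem_union, mem_sdiff]; tauto

theorem good_union_or_good_union_sdiff (hcyc : ∀ s ∈ 𝒞, IsCycleEdges G s)
    (h : Uncrossable G 𝒞) {C₁ : Finset (Sym2 V)} (hC₁ : C₁ ∈ 𝒞) {v w : V} (p : G.Walk v w)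
    (hp : p.IsPath) (hpC₁ : p.edges.toFinset ⊆ C₁) {C₂ P₂ : Finset (Sym2 V)} (hC₂ : C₂ ∈ 𝒞)
    (hP₂ : IsPathEdges G v w P₂) (hP₂C₂ : P₂ ⊆ C₂) :
    Good 𝒞 (p.edges.toFinset ∪ P₂) ∨ Good 𝒞 (p.edges.toFinset ∪ (C₂ \ P₂)) := by
  induction hn : p.length using Nat.strong_induction_on generalizing v C₂ P₂ with
  | _ n ih =>
  rcases eq_or_ne v w with rfl | hvw
  · obtain ⟨p₂, hp₂, rfl⟩ := hP₂
    rw [(isPath_iff_nil.mp hp₂).eq_nil]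
    exact Or.inr ⟨C₂, hC₂, by simp⟩
  have hvC₂ := edgeVerts_mono hP₂C₂ (hP₂.left_mem_edgeVerts hvw)
  obtain ⟨x, ⟨hxC₂, hxv⟩, hx, hfirst⟩ := p.exists_mem_support_forall_mem_takeUntil
    {y | y ∈ edgeVerts C₂ ∧ y ≠ v} ⟨w, p.end_mem_support,
      edgeVerts_mono hP₂C₂ (hP₂.right_mem_edgeVerts hvw), hvw.symm⟩
  have hsub {l : List (Sym2 V)} (hl : l ⊆ p.edges) : l.toFinset ⊆ C₁ :=
    fun f hf => hpC₁ (List.mem_toFinset.mpr (hl (List.mem_toFinset.mp hf)))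
  have hAC₂ : edgeVerts (p.takeUntil x hx).edges.toFinset ∩ edgeVerts C₂ ⊆ {v, x} := by
    rintro y ⟨hyA, hyC₂⟩
    by_cases hyv : y = v
    · exact Or.inl hyv
    · exact Or.inr (hfirst y (mem_support_of_mem_edgeVerts hyA) ⟨hyC₂, hyv⟩)
  obtain ⟨S, hS, hSC₂, hSA, -⟩ := h C₂ hC₂ C₁ hC₁ v x hxv.symm _ ⟨_, hp.takeUntil hx, rfl⟩
    (hsub (p.edges_takeUntil_subset_edges hx)) hAC₂ hvC₂ hxC₂
  have key (R : Finset (Sym2 V)) (hR : IsPathEdges G v w R) (hRC₂ : R ⊆ C₂)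
      (hxR : x ∈ edgeVerts R) :=
    good_union_or_good_union_sdiff_of_split (hcyc C₂ hC₂) hxv.symm hS hSC₂ hSA hR hRC₂ hxR
      fun P hP hPSA => ih _ (hn ▸ length_dropUntil_lt_length hx hxv) (p.dropUntil x hx)
        (hp.dropUntil hx) (hsub (p.edges_dropUntil_subset_edges hx)) hSA hP hPSA rfl
  rw [← edges_toFinset_takeUntil_union_dropUntil p hx]
  rw [← union_sdiff_of_subset hP₂C₂, edgeVerts_union] at hxC₂
  rcases hxC₂ with hxP₂ | hxP₂
  · exact key P₂ hP₂ hP₂C₂ hxP₂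
  · have := key _ ((hcyc C₂ hC₂).isPathEdges_sdiff hvw hP₂ hP₂C₂) sdiff_subset hxP₂
    rwa [Finset.sdiff_sdiff_eq_self hP₂C₂, or_comm] at this

end Uncrossable

/-- Let `𝒞` be an uncrossable family of cycles, `C₁, C₂ ∈ 𝒞`, `P₁` a `v`-`w`-path
contained in `C₁` and `P₂` a `v`-`w`-path contained in `C₂`. Then `P₁ + P₂` or
`P₁ + (C₂ - P₂)` is good. -/
theorem good_of_uncrossable (G : SimpleGraph V)
    (𝒞 : Set (Finset (Sym2 V))) (hcyc : ∀ s ∈ 𝒞, IsCycleEdges G s)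
    (h : Uncrossable G 𝒞)
    (C₁ C₂ : Finset (Sym2 V)) (hC₁ : C₁ ∈ 𝒞) (hC₂ : C₂ ∈ 𝒞)
    (v w : V) (P₁ P₂ : Finset (Sym2 V))
    (hP₁ : IsPathEdges G v w P₁) (hP₁sub : P₁ ⊆ C₁)
    (hP₂ : IsPathEdges G v w P₂) (hP₂sub : P₂ ⊆ C₂) :
    Good 𝒞 (P₁ ∪ P₂) ∨ Good 𝒞 (P₁ ∪ (C₂ \ P₂)) := by
  obtain ⟨p₁, hp₁, rfl⟩ := hP₁
  exact good_union_or_good_union_sdiff hcyc h hC₁ p₁ hp₁ hP₁sub hC₂ hP₂ hP₂sub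
end
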